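/- Part (3) of the key combinatorial lemma: let t, t' ∈ {+,-}^n agree at all positions except l and p with l < p, where t_l = -, t_p = +, t'_l = +, t'_p = -. Suppose t_{l+1} = ... = t_{p-1} = - and the - at position l of t survives in the reduced form of (t_l,...,t_n). Then h₋^{l+1}(t') = h₋^l(t) + 1. -/

import Mathlib

-- Signs: `true` encodes `+`, `false` encodes `-`.  In reduced forms, `none` encodes `0`.

/-- Replace the first surviving `+` (i.e. first `some true`) by `0` (i.e. `none`). -/
def zapPlus : List (Option Bool) → List (Option Bool)
  | [] => []
  | some true :: r => none :: r
  | y :: r => y :: zapPlus r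

/-- The reduced form `t^red` of a sign sequence `t ∈ {+,-}ⁿ`: repeatedly cancel pairs
`(t_a, t_b) = (-, +)` with `a < b` and only `0`'s strictly in between, replacing both
entries by `0`, until no `+` appears to the right of a `-`. -/
def red : List Bool → List (Option Bool)
  | [] => []
  | x :: s =>
    let r := red s
    if x then some true :: r
    else if r.any (· == some true) then none :: zapPlus r
    else some false :: r

/-- `h₊(t)`: the number of `+`'s in the reduced form of `t`. -/
def hp (t : List Bool) : ℕ := (red t).count (some true)

/-- `h₋(t)`: the number of `-`'s in the reduced form of `t`. -/
def hm (t : List Bool) : ℕ := (red t).count (some false)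

/-- The weight `wt(t) = h₋(t) - h₊(t)`. -/
def wt (t : List Bool) : ℤ := (hm t : ℤ) - (hp t : ℤ)

/-- The largest index `i` with `t^red_i = +`, if it exists. -/
def eIdx (t : List Bool) : Option ℕ :=
  ((List.range t.length).filter (fun i => (red t)[i]? == some (some true))).getLast?

/-- The smallest index `j` with `t^red_j = -`, if it exists. -/
def fIdx (t : List Bool) : Option ℕ :=
  ((List.range t.length).filter (fun i => (red t)[i]? == some (some false))).head?

/-- The crystal operator `ẽ`: flip the rightmost surviving `+` to `-` (or `0` = `none`). -/
def etilde (t : List Bool) : Option (List Bool) :=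
  (eIdx t).map (fun i => t.set i false)

/-- The crystal operator `f̃`: flip the leftmost surviving `-` to `+` (or `0` = `none`). -/
def ftilde (t : List Bool) : Option (List Bool) :=
  (fIdx t).map (fun i => t.set i true)

/-- The order `≻` on `{+,-}ⁿ`: `t' ≻ t` iff there is an index `i` such that
`t'_j = t_j` for all `j > i`, while `t'_i = -` and `t_i = +`. -/
def succOrd (t' t : List Bool) : Prop :=
  ∃ i : ℕ, (∀ j, i < j → t'[j]? = t[j]?) ∧ t'[i]? = some false ∧ t[i]? = some true


/-!
A `-` in front of `s` survives reduction exactly when `s` has no surviving `+`, so the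
reduction of a block of `k` minuses followed by `s` leaves `h₊(s) - k` pluses and adds
`k - h₊(s)` minuses. Both `(t_l, …, t_n)` and `(t'_{l+1}, …, t'_n)` are such a block of
`p - l` minuses followed by `(t_p, …, t_n)`, resp. `(t_{p+1}, …, t_n)`; the two tails differ
only by a leading `+`, which the block cancels because the `-` at `l` survives.
-/

lemma List.drop_eq_replicate_append_drop {α : Type*} (t : List α) (a : α) {i j : ℕ}
    (hij : i ≤ j) (h : ∀ q, i ≤ q → q < j → t[q]? = some a) :
    t.drop i = List.replicate (j - i) a ++ t.drop j := by
  apply List.ext_getElem?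
  intro q
  rw [List.getElem?_drop, List.getElem?_append, List.length_replicate]
  split_ifs with hq
  · rw [List.getElem?_replicate_of_lt hq]
    exact h _ (by omega) (by omega)
  · rw [List.getElem?_drop]
    congr 1
    omega

lemma List.drop_congr_of_getElem? {α : Type*} {s t : List α} (n : ℕ)
    (h : ∀ k, n ≤ k → s[k]? = t[k]?) : s.drop n = t.drop n := by
  apply List.ext_getElem?
  intro q
  simpa only [List.getElem?_drop] using h _ (by omega)

lemma count_some_true_zapPlus (r : List (Option Bool)) (h : some true ∈ r) :
    (zapPlus r).count (some true) + 1 = r.count (some true) := by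
  induction r with
  | nil => simp at h
  | cons a r ih =>
    match a with
    | some true => simp [zapPlus]
    | some false => simp [zapPlus, ih (by simpa using h)]
    | none => simp [zapPlus, ih (by simpa using h)]

lemma count_some_false_zapPlus (r : List (Option Bool)) :
    (zapPlus r).count (some false) = r.count (some false) := by
  induction r with
  | nil => rfl
  | cons a r ih =>
    match a with
    | some true => simp [zapPlus]
    | some false => simp [zapPlus, ih]
    | none => simp [zapPlus, ih]

lemma some_true_mem_red_iff (s : List Bool) : some true ∈ red s ↔ 0 < hp s :=
  List.count_pos_iff.symm

lemma red_cons_false (s : List Bool) :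
    red (false :: s) = if 0 < hp s then none :: zapPlus (red s) else some false :: red s := by
  simp [red, ← some_true_mem_red_iff]

lemma hp_cons_true (s : List Bool) : hp (true :: s) = hp s + 1 := by
  simp [hp, red]

lemma hm_cons_true (s : List Bool) : hm (true :: s) = hm s := by
  simp [hm, red]

lemma hp_cons_false (s : List Bool) : hp (false :: s) = hp s - 1 := by
  rw [hp, red_cons_false]
  split_ifs with h
  · have := count_some_true_zapPlus _ ((some_true_mem_red_iff s).2 h)
    simp only [List.count_cons_of_ne (Option.some_ne_none true).symm, hp]
    omega
  · have h0 : hp s = 0 := by omega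
    simp only [hp] at h0 ⊢
    simp [h0]

lemma hm_cons_false (s : List Bool) : hm (false :: s) = hm s + (1 - hp s) := by
  rw [hm, red_cons_false]
  split_ifs with h
  · simp [count_some_false_zapPlus, hm, Nat.sub_eq_zero_of_le h]
  · simp [hm, Nat.eq_zero_of_not_pos h]

lemma head_red_cons_false_eq_minus_iff (s : List Bool) :
    (red (false :: s))[0]? = some (some false) ↔ hp s = 0 := by
  rw [red_cons_false]
  split_ifs with h <;> simp <;> omega

lemma hp_replicate_false_append (k : ℕ) (s : List Bool) :
    hp (List.replicate k false ++ s) = hp s - k := by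
  induction k with
  | zero => simp
  | succ k ih => rw [List.replicate_succ, List.cons_append, hp_cons_false, ih]; omega

lemma hm_replicate_false_append (k : ℕ) (s : List Bool) :
    hm (List.replicate k false ++ s) = hm s + (k - hp s) := by
  induction k with
  | zero => simp
  | succ k ih =>
    rw [List.replicate_succ, List.cons_append, hm_cons_false, ih,
      hp_replicate_false_append]
    omega

lemma hm_replicate_false_append_of_head_survives {k : ℕ} (u : List Bool)
    (hsurv : (red (List.replicate k false ++ true :: u))[0]? = some (some false)) :
    hm (List.replicate k false ++ u) = hm (List.replicate k false ++ true :: u) + 1 := by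
  obtain _ | k := k
  · simp [red] at hsurv
  have hpu : hp u + 1 ≤ k := by
    rw [List.replicate_succ, List.cons_append, head_red_cons_false_eq_minus_iff,
      hp_replicate_false_append, hp_cons_true] at hsurv
    omega
  rw [hm_replicate_false_append, hm_replicate_false_append, hm_cons_true, hp_cons_true]
  omega

theorem comb_lemma_part3_general (t t' : List Bool)
    (l p : ℕ) (hlp : l < p)
    (hagree : ∀ k, k ≠ l → k ≠ p → t'[k]? = t[k]?)
    (htl : t[l]? = some false) (htp : t[p]? = some true)
    (htp' : t'[p]? = some false)
    (hbetween : ∀ q, l < q → q < p → t[q]? = some false)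
    (hsurv : (red (t.drop l))[0]? = some (some false)) :
    hm (t'.drop (l + 1)) = hm (t.drop l) + 1 := by
  have hpn : p < t.length := (List.getElem?_eq_some_iff.1 htp).1
  have ht : t.drop l = List.replicate (p - l) false ++ true :: t.drop (p + 1) := by
    rw [List.drop_eq_replicate_append_drop t false hlp.le fun q hlq hqp => ?_,
      List.drop_eq_getElem_cons hpn, (List.getElem_eq_iff _).2 htp]
    rcases hlq.eq_or_lt with rfl | hlq
    exacts [htl, hbetween q hlq hqp]
  have ht' : t'.drop (l + 1) = List.replicate (p - l) false ++ t.drop (p + 1) := by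
    rw [List.drop_eq_replicate_append_drop t' false (j := p + 1) (by omega) fun q hlq hqp => ?_,
      List.drop_congr_of_getElem? (p + 1) fun k hk => hagree k (by omega) (by omega),
      Nat.add_sub_add_right]
    rcases (Nat.lt_succ_iff.1 hqp).eq_or_lt with rfl | hqp
    exacts [htp', (hagree q (by omega) hqp.ne).trans (hbetween q hlq hqp)]
  rw [ht] at hsurv ⊢
  rw [ht']
  exact hm_replicate_false_append_of_head_survives _ hsurv

/-- Part (3) of the key combinatorial lemma: let `t, t' ∈ {+,-}ⁿ` agree at all positions
except `l` and `p` with `l < p`, where `t_l = -`, `t_p = +`, `t'_l = +`, `t'_p = -`.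
Suppose `t_{l+1} = ... = t_{p-1} = -` and the `-` at position `l` of `t` survives in
the reduced form of `(t_l, ..., t_n)`. Then `h₋^{l+1}(t') = h₋^l(t) + 1`. -/
theorem comb_lemma_part3 (t t' : List Bool) (hlen : t'.length = t.length)
    (l p : ℕ) (hlp : l < p) (hpn : p < t.length)
    (hagree : ∀ k, k ≠ l → k ≠ p → t'[k]? = t[k]?)
    (htl : t[l]? = some false) (htp : t[p]? = some true)
    (htl' : t'[l]? = some true) (htp' : t'[p]? = some false)
    (hbetween : ∀ q, l < q → q < p → t[q]? = some false)
    (hsurv : (red (t.drop l))[0]? = some (some false)) :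
    hm (t'.drop (l + 1)) = hm (t.drop l) + 1 :=
  comb_lemma_part3_general t t' l p hlp hagree htl htp htp' hbetween hsurv
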